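/- Let (μ_i)_{i∈I} be a net of Borel probability measures on a uniform space X. Then (μ_i) is a Lévy net if and only if for every bounded uniformly continuous pseudo-metric d on X and every α > 0, the α-observable diameter ObsDiam(X,d,μ_i;−α) converges to 0 along the net. -/

import Mathlib

open Filter Topology MeasureTheory

/-- A net `(μ i)` of Borel probability measures on a uniform space `X` is a Lévy net
if for every family `(B i)` of Borel sets with `liminf μ_i(B_i) > 0` and every open
entourage `U` of `X`, `μ_i(U[B_i]) → 1`. -/
def LevyNet {X ι : Type*} [UniformSpace X] [MeasurableSpace X] (l : Filter ι)
    (μ : ι → Measure X) : Prop :=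
  ∀ B : ι → Set X, (∀ i, MeasurableSet (B i)) →
    0 < l.liminf (fun i => μ i (B i)) →
    ∀ U ∈ uniformity X, IsOpen U →
      Tendsto (fun i => μ i {y | ∃ x ∈ B i, (x, y) ∈ U}) l (𝓝 1)
/-- The `α`-partial diameter of a Borel probability measure `ν` on `ℝ`:
the infimum of diameters of Borel sets of `ν`-measure at least `1 − α`. -/
noncomputable def partDiam (ν : MeasureTheory.Measure ℝ) (α : ℝ) : ENNReal :=
  ⨅ (B : Set ℝ) (_ : MeasurableSet B ∧ 1 - ENNReal.ofReal α ≤ ν B), EMetric.diam B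

/-- Gromov's `α`-observable diameter of `(X, d, μ)`: the supremum of the partial
diameters of the push-forwards of `μ` under (measurable) `1`-Lipschitz functions
`(X, d) → ℝ`. -/
noncomputable def obsDiam {X : Type*} [MeasurableSpace X] (d : X → X → ℝ)
    (μ : MeasureTheory.Measure X) (α : ℝ) : ENNReal :=
  ⨆ (f : X → ℝ) (_ : Measurable f ∧ ∀ x y, |f x - f y| ≤ d x y),
    partDiam (μ.map f) α

/-!
A Lévy net pushes forward, under any `1`-Lipschitz function `f`, to measures concentrated near a
median `t`: the sublevel set `{f ≤ t}` and the superlevel set `{f ≥ t}` both carry mass at least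
`1/2`, so almost everything is uniformly close to both, and there `f` is close to `t`.

Conversely, by Weil's lemma an entourage `U` contains `{d < 1}` for a bounded uniformly continuous
pseudometric `d`. If `B` carries mass more than `γ` and the `γ`-observable diameter is small, the
push-forward of the `1`-Lipschitz function `d(B, ·)` has an atom of mass more than `γ` at `0`, so
the small set carrying mass `1 - γ` must contain `0`; hence `d(B, ·) < 1` on mass `1 - γ`.
-/

open ProbabilityTheory Set Uniformity

theorem Filter.eventually_forall_of_forall_eventually_apply {ι α : Type*} [Nonempty α]
    {l : Filter ι} {P : ι → α → Prop} (h : ∀ f : ι → α, ∀ᶠ i in l, P i (f i)) :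
    ∀ᶠ i in l, ∀ a, P i a := by
  have drinker : ∀ i, ∃ a, P i a → ∀ b, P i b := fun i => by
    by_cases hi : ∀ b, P i b
    · exact ⟨Classical.arbitrary α, fun _ => hi⟩
    · obtain ⟨a, ha⟩ := not_forall.1 hi
      exact ⟨a, fun h' => absurd h' ha⟩
  choose f hf using drinker
  exact (h f).mono hf

theorem tendsto_measure_compl_of_tendsto_one {ι X : Type*} [MeasurableSpace X] {l : Filter ι}
    {μ : ι → Measure X} [∀ i, IsProbabilityMeasure (μ i)] {A : ι → Set X}
    (hA : ∀ i, MeasurableSet (A i)) (h : Tendsto (fun i => μ i (A i)) l (𝓝 1)) :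
    Tendsto (fun i => μ i (A i)ᶜ) l (𝓝 0) := by
  simp_rw [prob_compl_eq_one_sub (hA _)]
  exact (ENNReal.tendsto_const_sub_nhds_zero_iff ENNReal.one_ne_top fun _ => prob_le_one).2 h

theorem exists_median (ν : Measure ℝ) [IsProbabilityMeasure ν] :
    ∃ t, 2⁻¹ ≤ ν (Iic t) ∧ 2⁻¹ ≤ ν (Ici t) := by
  set S := {x | 2⁻¹ ≤ cdf ν x}
  have hS : S.Nonempty := ((tendsto_cdf_atTop ν).eventually_const_le (by norm_num)).exists
  have hSbdd : BddBelow S := by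
    obtain ⟨a, ha⟩ := ((tendsto_cdf_atBot ν).eventually_lt_const
      (show (0 : ℝ) < 2⁻¹ by norm_num)).exists_forall_of_atBot
    refine ⟨a, fun x hx => le_of_not_gt fun hxa => ?_⟩
    exact (ha x hxa.le).not_ge hx
  refine ⟨sInf S, ?_, ?_⟩
  · rw [← ofReal_cdf, ← ENNReal.ofReal_ofNat, ← ENNReal.ofReal_inv_of_pos two_pos]
    refine ENNReal.ofReal_le_ofReal (ge_of_tendsto
      (((cdf ν).right_continuous _).mono Ioi_subset_Ici_self) ?_)
    filter_upwards [self_mem_nhdsWithin] with x hx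
    obtain ⟨s, hs, hsx⟩ := exists_lt_of_csInf_lt hS hx
    exact hs.trans (monotone_cdf ν hsx.le)
  · rw [← measure_cdf ν, StieltjesFunction.measure_Ici _ (tendsto_cdf_atTop ν),
      ← ENNReal.ofReal_ofNat, ← ENNReal.ofReal_inv_of_pos two_pos]
    refine ENNReal.ofReal_le_ofReal ?_
    have : Function.leftLim (cdf ν) (sInf S) ≤ 2⁻¹ := by
      refine le_of_tendsto ((monotone_cdf ν).tendsto_leftLim _) ?_
      filter_upwards [self_mem_nhdsWithin] with x hx
      exact le_of_lt (not_le.1 fun h => (csInf_le hSbdd h).not_gt hx)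
    linarith

section PseudometricFacts

variable {X : Type*} {d : X → X → ℝ}

theorem nonneg_of_pseudometric (h0 : ∀ x, d x x = 0) (hsymm : ∀ x y, d x y = d y x)
    (htri : ∀ x y z, d x z ≤ d x y + d y z) (x y : X) : 0 ≤ d x y := by
  have := htri x y x
  rw [h0, hsymm y x] at this
  linarith

variable [UniformSpace X]

theorem mem_uniformity_of_uniformContinuous_pseudometric (h0 : ∀ x, d x x = 0)
    (hd : UniformContinuous fun p : X × X => d p.1 p.2) {ε : ℝ} (hε : 0 < ε) :
    {p : X × X | d p.1 p.2 < ε} ∈ 𝓤 X := by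
  have hdiag : Tendsto (fun p : X × X => ((p.1, p.1), p)) (𝓤 X) (𝓤 (X × X)) := by
    rw [uniformity_prod]
    exact tendsto_inf.2 ⟨tendsto_comap_iff.2 (tendsto_diag_uniformity Prod.fst _),
      tendsto_comap_iff.2 tendsto_id⟩
  filter_upwards [hdiag.eventually (Metric.uniformity_basis_dist.tendsto_right_iff.1 hd ε hε)]
    with p hp
  simp only [Real.dist_eq, h0, zero_sub, abs_neg] at hp
  exact (le_abs_self _).trans_lt hp

theorem uniformContinuous_of_abs_sub_le (h0 : ∀ x, d x x = 0)
    (hd : UniformContinuous fun p : X × X => d p.1 p.2) {f : X → ℝ}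
    (hf : ∀ x y, |f x - f y| ≤ d x y) : UniformContinuous f :=
  Metric.uniformity_basis_dist.tendsto_right_iff.2 fun _ hε =>
    mem_of_superset (mem_uniformity_of_uniformContinuous_pseudometric h0 hd hε)
      fun p hp => (hf p.1 p.2).trans_lt hp

end PseudometricFacts

section Weil

open scoped SetRel

variable {X : Type*} [UniformSpace X]

theorem exists_symm_comp_chain {U : SetRel X X} (hU : U ∈ 𝓤 X) :
    ∃ V : ℕ → SetRel X X, (∀ n, V n ∈ 𝓤 X) ∧ (∀ n, (V n).IsSymm) ∧
      (∀ n, V (n + 1) ○ V (n + 1) ⊆ V n) ∧ V 0 ⊆ U := by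
  choose! half half_mem half_symm half_comp using
    fun s (hs : s ∈ 𝓤 X) => comp_symm_mem_uniformity_sets hs
  have mem : ∀ n, half^[n] U ∈ 𝓤 X := by
    intro n
    induction n with
    | zero => exact hU
    | succ n ih => rw [Function.iterate_succ_apply']; exact half_mem _ ih
  refine ⟨fun n => half^[n + 1] U, fun n => mem (n + 1), fun n => ?_, fun n => ?_, ?_⟩
  · dsimp only; rw [Function.iterate_succ_apply']; exact half_symm _ (mem n)
  · dsimp only; rw [Function.iterate_succ_apply' _ (n + 1)]; exact half_comp _ (mem (n + 1))
  · exact (subset_comp_self_of_mem_uniformity (mem 1)).trans (half_comp _ hU)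

/-- Weil's lemma: the chain `V n` is a countable basis of a coarser uniformity, which is therefore
pseudometrizable. -/
theorem exists_pseudoMetricSpace_le {U : SetRel X X} (hU : U ∈ 𝓤 X) :
    ∃ m : PseudoMetricSpace X, ‹UniformSpace X› ≤ m.toUniformSpace ∧
      U ∈ 𝓤[m.toUniformSpace] := by
  obtain ⟨V, V_mem, V_symm, V_comp, V_sub⟩ := exists_symm_comp_chain hU
  have V_succ : ∀ n, V (n + 1) ⊆ V n := fun n =>
    (subset_comp_self_of_mem_uniformity (V_mem (n + 1))).trans (V_comp n)
  have basis : (⨅ n, 𝓟 (V n)).HasBasis (fun _ => True) V :=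
    hasBasis_iInf_principal (antitone_nat_of_succ_le V_succ).directed_ge
  let u : UniformSpace X := .ofCore <| .mk' (⨅ n, 𝓟 (V n))
    (fun r hr x => by
      obtain ⟨n, -, hn⟩ := basis.mem_iff.1 hr
      exact hn (refl_mem_uniformity (V_mem n)))
    (fun r hr => by
      obtain ⟨n, -, hn⟩ := basis.mem_iff.1 hr
      have := V_symm n
      exact mem_of_superset (basis.mem_of_mem trivial) fun p hp => hn ((V n).symm hp))
    (fun r hr => by
      obtain ⟨n, -, hn⟩ := basis.mem_iff.1 hr
      exact ⟨V (n + 1), basis.mem_of_mem trivial, (V_comp n).trans hn⟩)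
  have : IsCountablyGenerated 𝓤[u] := basis.isCountablyGenerated
  obtain ⟨m, hm⟩ := @UniformSpace.metrizable_uniformity X u this
  refine ⟨m, ?_, ?_⟩ <;> rw [hm]
  · exact le_iInf fun n => le_principal_iff.2 (V_mem n)
  · exact mem_of_superset (basis.mem_of_mem (i := 0) trivial) V_sub

theorem min_one_le_add_min_one {a b c : ℝ} (h : a ≤ b + c) (hb : 0 ≤ b) (hc : 0 ≤ c) :
    min a 1 ≤ min b 1 + min c 1 := by
  simp only [min_def]; split_ifs <;> linarith

theorem exists_pseudometric_lt_one_subset {U : SetRel X X} (hU : U ∈ 𝓤 X) :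
    ∃ d : X → X → ℝ, (∀ x, d x x = 0) ∧ (∀ x y, d x y = d y x) ∧
      (∀ x y z, d x z ≤ d x y + d y z) ∧ (∀ x y, d x y ≤ 1) ∧
      UniformContinuous (fun p : X × X => d p.1 p.2) ∧ ∀ x y, d x y < 1 → (x, y) ∈ U := by
  obtain ⟨m, hle, hUm⟩ := exists_pseudoMetricSpace_le hU
  obtain ⟨ε, hε, hεU⟩ := (@Metric.mem_uniformity_dist X m U).1 hUm
  have hid₁ := le_iff_uniformContinuous_id.1 hle
  have hid : @UniformContinuous (X × X) (X × X) _
      (@instUniformSpaceProd X X m.toUniformSpace m.toUniformSpace) id :=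
    @UniformContinuous.prodMap X X X X _ _ m.toUniformSpace m.toUniformSpace _ _ hid₁ hid₁
  refine ⟨fun x y => min (@dist X m.toDist x y / ε) 1, fun x => by simp,
    fun x y => by simp only [@dist_comm X m x y],
    fun x y z => min_one_le_add_min_one ?_ ?_ ?_, fun x y => min_le_right _ _,
    ?_, fun x y h => hεU ?_⟩
  · rw [← add_div]; gcongr; exact @dist_triangle X m x y z
  · have := @dist_nonneg X m x y; positivity
  · have := @dist_nonneg X m y z; positivity
  · have hdist := @UniformContinuous.comp (X × X) (X × X) ℝ _
      (@instUniformSpaceProd X X m.toUniformSpace m.toUniformSpace) _ _ id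
      (@uniformContinuous_dist X m) hid
    exact (LipschitzWith.id.min_const 1).uniformContinuous.comp (hdist.div_const' ε)
  · have := (min_lt_iff.1 h).resolve_right (lt_irrefl 1)
    rwa [div_lt_one hε] at this

end Weil

section InfDist

variable {X : Type*} {d : X → X → ℝ} {B : Set X}

/-- Junk value `0` when `B` is empty. -/
noncomputable def pseudoInfDist (d : X → X → ℝ) (B : Set X) (y : X) : ℝ := ⨅ b : B, d b y

theorem pseudoInfDist_le (hnn : ∀ x y, 0 ≤ d x y) {b y : X} (hb : b ∈ B) :
    pseudoInfDist d B y ≤ d b y :=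
  ciInf_le ⟨0, by rintro _ ⟨b', rfl⟩; exact hnn _ _⟩ (⟨b, hb⟩ : B)

theorem pseudoInfDist_eq_zero_of_mem (h0 : ∀ x, d x x = 0) (hnn : ∀ x y, 0 ≤ d x y) {y : X}
    (hy : y ∈ B) : pseudoInfDist d B y = 0 := by
  have : Nonempty B := ⟨⟨y, hy⟩⟩
  exact le_antisymm (h0 y ▸ pseudoInfDist_le hnn hy) (le_ciInf fun b => hnn _ _)

theorem abs_sub_pseudoInfDist_le (hsymm : ∀ x y, d x y = d y x)
    (htri : ∀ x y z, d x z ≤ d x y + d y z) (hnn : ∀ x y, 0 ≤ d x y) (hB : B.Nonempty)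
    (x y : X) : |pseudoInfDist d B x - pseudoInfDist d B y| ≤ d x y := by
  have : Nonempty B := hB.to_subtype
  have key : ∀ x y, pseudoInfDist d B x ≤ pseudoInfDist d B y + d y x := fun x y =>
    sub_le_iff_le_add.1 <| le_ciInf fun b =>
      sub_le_iff_le_add.2 ((pseudoInfDist_le hnn b.2).trans (htri b y x))
  rw [abs_sub_le_iff]
  constructor
  · linarith [key x y, hsymm x y]
  · linarith [key y x]

theorem exists_lt_of_pseudoInfDist_lt (hB : B.Nonempty) {y : X} {r : ℝ}
    (h : pseudoInfDist d B y < r) : ∃ b ∈ B, d b y < r := by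
  have : Nonempty B := hB.to_subtype
  obtain ⟨⟨b, hb⟩, hlt⟩ := exists_lt_of_ciInf_lt h
  exact ⟨b, hb, hlt⟩

end InfDist

theorem partDiam_le_obsDiam {X : Type*} [MeasurableSpace X] {d : X → X → ℝ} {μ : Measure X}
    {f : X → ℝ} (hf : Measurable f) (hfd : ∀ x y, |f x - f y| ≤ d x y) (α : ℝ) :
    partDiam (μ.map f) α ≤ obsDiam d μ α :=
  le_iSup₂ (f := fun g (_ : Measurable g ∧ ∀ x y, |g x - g y| ≤ d x y) => partDiam (μ.map g) α)
    f ⟨hf, hfd⟩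

theorem exists_measure_ge_of_partDiam_lt {ν : Measure ℝ} {α : ℝ} {r : ENNReal}
    (h : partDiam ν α < r) :
    ∃ S, MeasurableSet S ∧ 1 - ENNReal.ofReal α ≤ ν S ∧ Metric.ediam S < r := by
  simp only [partDiam, iInf_lt_iff, exists_prop] at h
  obtain ⟨S, ⟨hS, hνS⟩, hdiam⟩ := h
  exact ⟨S, hS, hνS, hdiam⟩

theorem partDiam_le_ediam {ν : Measure ℝ} {α : ℝ} {S : Set ℝ} (hS : MeasurableSet S)
    (h : 1 - ENNReal.ofReal α ≤ ν S) : partDiam ν α ≤ Metric.ediam S :=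
  iInf₂_le S ⟨hS, h⟩

theorem measure_thickening_ge_of_obsDiam_lt {X : Type*} [UniformSpace X] [MeasurableSpace X]
    [OpensMeasurableSpace X] {μ : Measure X} [IsProbabilityMeasure μ] {d : X → X → ℝ}
    (h0 : ∀ x, d x x = 0) (hsymm : ∀ x y, d x y = d y x) (htri : ∀ x y z, d x z ≤ d x y + d y z)
    (hd : UniformContinuous fun p : X × X => d p.1 p.2) {B : Set X} {γ r : ℝ}
    (hB : ENNReal.ofReal γ < μ B) (hobs : obsDiam d μ γ < ENNReal.ofReal r) :
    1 - ENNReal.ofReal γ ≤ μ {y | ∃ b ∈ B, d b y < r} := by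
  have hnn := nonneg_of_pseudometric h0 hsymm htri
  have hBne : B.Nonempty := nonempty_of_measure_ne_zero (pos_of_gt hB).ne'
  set F := pseudoInfDist d B
  have hFd := abs_sub_pseudoInfDist_le hsymm htri hnn hBne
  have hF : Measurable F := (uniformContinuous_of_abs_sub_le h0 hd hFd).continuous.measurable
  obtain ⟨S, hS, hνS, hdiam⟩ :=
    exists_measure_ge_of_partDiam_lt ((partDiam_le_obsDiam hF hFd γ).trans_lt hobs)
  rw [Measure.map_apply hF hS] at hνS
  have h0S : (0 : ℝ) ∈ S := by
    by_contra h0S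
    have : μ B ≤ μ (F ⁻¹' S)ᶜ := measure_mono fun y hy h =>
      h0S (pseudoInfDist_eq_zero_of_mem h0 hnn hy ▸ h)
    refine hB.not_ge (this.trans ?_)
    exact (prob_compl_le_one_sub_of_le_prob hνS (hF hS)).trans tsub_tsub_le
  refine hνS.trans (measure_mono fun y hy => exists_lt_of_pseudoInfDist_lt hBne ?_)
  have := (Metric.edist_le_ediam_of_mem (show F y ∈ S from hy) h0S).trans_lt hdiam
  rw [edist_lt_ofReal, Real.dist_eq, sub_zero] at this
  exact (le_abs_self _).trans_lt this

theorem LevyNet.eventually_partDiam_map_le {X ι : Type*} [UniformSpace X] [MeasurableSpace X]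
    [OpensMeasurableSpace X] {l : Filter ι} {μ : ι → Measure X} (hL : LevyNet l μ)
    [∀ i, IsProbabilityMeasure (μ i)] {U : SetRel X X} (hU : U ∈ 𝓤 X) (hUo : IsOpen U)
    {ε α : ℝ} (hα : 0 < α) {f : ι → X → ℝ} (hf : ∀ i, Measurable (f i))
    (hfU : ∀ i, ∀ p ∈ U, |f i p.1 - f i p.2| < ε) :
    ∀ᶠ i in l, partDiam ((μ i).map (f i)) α ≤ ENNReal.ofReal (2 * ε) := by
  have : ∀ i, IsProbabilityMeasure ((μ i).map (f i)) := fun i =>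
    Measure.isProbabilityMeasure_map (hf i).aemeasurable
  choose t ht using fun i => exists_median ((μ i).map (f i))
  have near : ∀ C : ι → Set X, (∀ i, MeasurableSet (C i)) → (∀ i, 2⁻¹ ≤ μ i (C i)) →
      Tendsto (fun i => μ i (U.image (C i))ᶜ) l (𝓝 0) := fun C hC hCμ =>
    tendsto_measure_compl_of_tendsto_one (fun _ => hUo.relImage.measurableSet) <|
      hL C hC ((ENNReal.inv_pos.2 ENNReal.ofNat_ne_top).trans_le
        (le_liminf_of_le (by isBoundedDefault) (Eventually.of_forall hCμ))) U hU hUo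
  have below := near (fun i => f i ⁻¹' Iic (t i)) (fun i => hf i measurableSet_Iic)
    fun i => (Measure.map_apply (hf i) measurableSet_Iic).symm.trans_ge (ht i).1
  have above := near (fun i => f i ⁻¹' Ici (t i)) (fun i => hf i measurableSet_Ici)
    fun i => (Measure.map_apply (hf i) measurableSet_Ici).symm.trans_ge (ht i).2
  have far : Tendsto (fun i => μ i (f i ⁻¹' Ioo (t i - ε) (t i + ε))ᶜ) l (𝓝 0) := by
    refine tendsto_of_tendsto_of_tendsto_of_le_of_le tendsto_const_nhds
      (by simpa using below.add above) (fun _ => bot_le) fun i => ?_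
    refine (measure_mono ?_).trans (measure_union_le _ _)
    rw [← compl_inter, compl_subset_compl]
    rintro y ⟨⟨x, hx, hxy⟩, ⟨x', hx', hx'y⟩⟩
    have h₁ := abs_lt.1 (hfU i _ hxy)
    have h₂ := abs_lt.1 (hfU i _ hx'y)
    have hx : f i x ≤ t i := hx
    have hx' : t i ≤ f i x' := hx'
    exact ⟨by linarith [h₂.2], by linarith [h₁.1]⟩
  filter_upwards [far.eventually_le_const (ENNReal.ofReal_pos.2 hα)] with i hi
  have hIoo : MeasurableSet (f i ⁻¹' Ioo (t i - ε) (t i + ε)) := hf i measurableSet_Ioo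
  calc partDiam ((μ i).map (f i)) α ≤ Metric.ediam (Ioo (t i - ε) (t i + ε)) := by
        refine partDiam_le_ediam measurableSet_Ioo ?_
        have h := prob_compl_eq_one_sub (μ := μ i) hIoo.compl
        rw [compl_compl] at h
        rw [Measure.map_apply (hf i) measurableSet_Ioo, h]
        exact tsub_le_tsub_left hi 1
    _ = ENNReal.ofReal (2 * ε) := by rw [Real.ediam_Ioo]; ring_nf

theorem levyNet_of_tendsto_obsDiam {X ι : Type*} [UniformSpace X] [MeasurableSpace X]
    [OpensMeasurableSpace X] {l : Filter ι} {μ : ι → Measure X} [∀ i, IsProbabilityMeasure (μ i)]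
    (h : ∀ d : X → X → ℝ, (∀ x, d x x = 0) → (∀ x y, d x y = d y x) →
        (∀ x y z, d x z ≤ d x y + d y z) → (∃ C : ℝ, ∀ x y, d x y ≤ C) →
        UniformContinuous (fun p : X × X => d p.1 p.2) →
        ∀ α : ℝ, 0 < α → Tendsto (fun i => obsDiam d (μ i) α) l (𝓝 0)) :
    LevyNet l μ := by
  intro B _ hB U hU _
  obtain ⟨d, h0, hsymm, htri, hd1, hd, hdU⟩ := exists_pseudometric_lt_one_subset hU
  rw [ENNReal.tendsto_nhds ENNReal.one_ne_top]
  intro ε hε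
  obtain ⟨γ, -, hγ0, hγ⟩ := ENNReal.lt_iff_exists_real_btwn.1 (lt_min hB hε)
  have hobs := h d h0 hsymm htri ⟨1, hd1⟩ hd γ (ENNReal.ofReal_pos.1 hγ0)
  filter_upwards [eventually_lt_of_lt_liminf (hγ.trans_le (min_le_left _ _)),
    hobs.eventually_lt_const (ENNReal.ofReal_pos.2 one_pos)] with i hBi hobsi
  refine ⟨?_, prob_le_one.trans le_self_add⟩
  calc 1 - ε ≤ 1 - ENNReal.ofReal γ := tsub_le_tsub_left (hγ.le.trans (min_le_right _ _)) 1
    _ ≤ μ i {y | ∃ b ∈ B i, d b y < 1} :=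
      measure_thickening_ge_of_obsDiam_lt h0 hsymm htri hd hBi hobsi
    _ ≤ μ i {y | ∃ x ∈ B i, (x, y) ∈ U} :=
      measure_mono fun y ⟨b, hb, hby⟩ => ⟨b, hb, hdU b y hby⟩

theorem LevyNet.tendsto_obsDiam {X ι : Type*} [UniformSpace X] [MeasurableSpace X]
    [OpensMeasurableSpace X] {l : Filter ι} {μ : ι → Measure X} (hL : LevyNet l μ)
    [∀ i, IsProbabilityMeasure (μ i)] {d : X → X → ℝ} (h0 : ∀ x, d x x = 0)
    (hsymm : ∀ x y, d x y = d y x) (htri : ∀ x y z, d x z ≤ d x y + d y z)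
    (hd : UniformContinuous fun p : X × X => d p.1 p.2) {α : ℝ} (hα : 0 < α) :
    Tendsto (fun i => obsDiam d (μ i) α) l (𝓝 0) := by
  rw [ENNReal.tendsto_nhds_zero]
  intro r hr
  obtain ⟨ε, -, hε0, hεr⟩ := ENNReal.lt_iff_exists_real_btwn.1 hr
  have hε : 0 < ε / 2 := half_pos (ENNReal.ofReal_pos.1 hε0)
  have : Nonempty {f : X → ℝ // Measurable f ∧ ∀ x y, |f x - f y| ≤ d x y} :=
    ⟨⟨0, measurable_const, fun x y => by
      simpa using nonneg_of_pseudometric h0 hsymm htri x y⟩⟩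
  have uniform : ∀ᶠ i in l, ∀ f : {f : X → ℝ // Measurable f ∧ ∀ x y, |f x - f y| ≤ d x y},
      partDiam ((μ i).map f.1) α ≤ ENNReal.ofReal ε := by
    refine Filter.eventually_forall_of_forall_eventually_apply fun f => ?_
    simpa only [mul_div_cancel₀ ε two_ne_zero] using hL.eventually_partDiam_map_le
      (mem_uniformity_of_uniformContinuous_pseudometric h0 hd hε)
      (isOpen_lt hd.continuous continuous_const) hα (fun i => (f i).2.1)
      fun i p hp => ((f i).2.2 p.1 p.2).trans_lt hp
  filter_upwards [uniform] with i hi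
  exact iSup₂_le fun f hf => (hi ⟨f, hf⟩).trans hεr.le

theorem stmt15_general {X ι : Type*} [UniformSpace X] [MeasurableSpace X] [BorelSpace X]
    (l : Filter ι) (μ : ι → Measure X)
    (hprob : ∀ i, IsProbabilityMeasure (μ i)) :
    LevyNet l μ ↔
      ∀ d : X → X → ℝ, (∀ x, d x x = 0) → (∀ x y, d x y = d y x) →
        (∀ x y z, d x z ≤ d x y + d y z) → (∃ C : ℝ, ∀ x y, d x y ≤ C) →
        UniformContinuous (fun p : X × X => d p.1 p.2) →
        ∀ α : ℝ, 0 < α → Tendsto (fun i => obsDiam d (μ i) α) l (𝓝 0) :=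
  ⟨fun hL _ h0 hsymm htri _ hd _ hα => hL.tendsto_obsDiam h0 hsymm htri hd hα,
    levyNet_of_tendsto_obsDiam⟩

/-- A net of Borel probability measures on a uniform space is a Lévy net iff for every
bounded uniformly continuous pseudo-metric `d` and every `α > 0`, the `α`-observable
diameters converge to `0` along the net. -/
theorem stmt15 {X ι : Type*} [UniformSpace X] [MeasurableSpace X] [BorelSpace X]
    (l : Filter ι) [l.NeBot] (μ : ι → Measure X)
    (hprob : ∀ i, IsProbabilityMeasure (μ i)) :
    LevyNet l μ ↔
      ∀ d : X → X → ℝ, (∀ x, d x x = 0) → (∀ x y, d x y = d y x) →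
        (∀ x y z, d x z ≤ d x y + d y z) → (∃ C : ℝ, ∀ x y, d x y ≤ C) →
        UniformContinuous (fun p : X × X => d p.1 p.2) →
        ∀ α : ℝ, 0 < α → Tendsto (fun i => obsDiam d (μ i) α) l (𝓝 0) :=
  stmt15_general l μ hprob
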